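/- arXiv:2009.02713 — 4 statements merged into one kernel-verified Lean document; each statement's English description precedes it below -/
import Mathlib

section
/- Let d, k be natural numbers, R > 0 and 0 < ε < 2R. Let σ : ℂ^k → ℂ^k be complex-differentiable on the product strip S_R^k = {w ∈ ℂ^k : |Im w_i| < R for all i}. Let β ∈ [0,∞)^d and ρ ∈ (1,∞)^d satisfy Σ_{j=1}^d (ρ_j − 1) β_j ≤ ε. Let W be a real k×d matrix with |W_{ij}| ≤ β_j for all i, j, and let b ∈ ℝ^k. Then the map z ↦ σ(W ξ(z) + b) is well defined and complex-differentiable at every point of the polytube T_ρ = {z ∈ ℂ^d : dist(z_j, [−1,1]) < ρ_j − 1 for all j}, and moreover there exists a constant C such that ‖σ(W ξ(z) + b)‖ ≤ C for all z ∈ T_ρ. -/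
open scoped BigOperators

/-- quantified holomorphy of shallow neural networks on polytubes:
`z ↦ σ(W ξ(z) + b)` is complex-differentiable at every point of the polytube
`T_ρ` and bounded there. -/
theorem shallow_network_holomorphic_on_polytube
    (d k : ℕ) (R ε : ℝ) (hR : 0 < R) (hε : 0 < ε) (hεR : ε < 2 * R)
    (σ : (Fin k → ℂ) → (Fin k → ℂ))
    (hσ : DifferentiableOn ℂ σ {w : Fin k → ℂ | ∀ i, |(w i).im| < R})
    (β : Fin d → ℝ) (hβ : ∀ j, 0 ≤ β j)
    (ρ : Fin d → ℝ) (hρ : ∀ j, 1 < ρ j)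
    (hsum : ∑ j, (ρ j - 1) * β j ≤ ε)
    (W : Fin k → Fin d → ℝ) (hW : ∀ i j, |W i j| ≤ β j)
    (b : Fin k → ℝ) :
    (∀ z ∈ {z : Fin d → ℂ |
        ∀ j, Metric.infDist (z j) (((↑) : ℝ → ℂ) '' Set.Icc (-1 : ℝ) 1) < ρ j - 1},
      DifferentiableAt ℂ
        (fun z : Fin d → ℂ =>
          σ (fun i => (∑ j, (W i j : ℂ) * ((z j + 1) / 2)) + (b i : ℂ))) z) ∧
    ∃ C : ℝ, ∀ z ∈ {z : Fin d → ℂ |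
        ∀ j, Metric.infDist (z j) (((↑) : ℝ → ℂ) '' Set.Icc (-1 : ℝ) 1) < ρ j - 1},
      ‖σ (fun i => (∑ j, (W i j : ℂ) * ((z j + 1) / 2)) + (b i : ℂ))‖ ≤ C := by
  set S : Set ℂ := ((↑) : ℝ → ℂ) '' Set.Icc (-1 : ℝ) 1 with hS
  set T : Set (Fin d → ℂ) := {z | ∀ j, Metric.infDist (z j) S < ρ j - 1} with hT
  set U : Set (Fin k → ℂ) := {w | ∀ i, |(w i).im| < R} with hU
  have hSne : S.Nonempty := ⟨(1:ℂ), ⟨1, by simp, by simp⟩⟩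
  -- basic estimates for points of the polytube
  have him_le : ∀ z ∈ T, ∀ j, |(z j).im| ≤ ρ j - 1 := by
    intro z hz j
    obtain ⟨y, ⟨t, -, rfl⟩, hy⟩ := (Metric.infDist_lt_iff hSne).1 (hz j)
    rw [Complex.dist_eq] at hy
    have := Complex.abs_im_le_norm (z j - t)
    simp only [Complex.sub_im, Complex.ofReal_im, sub_zero] at this
    linarith
  have habs_le : ∀ z ∈ T, ∀ j, ‖z j‖ ≤ ρ j := by
    intro z hz j
    obtain ⟨y, ⟨t, ht, rfl⟩, hy⟩ := (Metric.infDist_lt_iff hSne).1 (hz j)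
    rw [Complex.dist_eq] at hy
    have ht' : |t| ≤ 1 := abs_le.2 ht
    have h2 : ‖z j‖ ≤ ‖z j - t‖ + ‖(t:ℂ)‖ := by
      simpa using norm_add_le (z j - t) (t:ℂ)
    have h3 : ‖(t:ℂ)‖ ≤ 1 := by simpa using ht'
    linarith
  set A : (Fin d → ℂ) → (Fin k → ℂ) :=
    fun z => fun i => (∑ j, (W i j : ℂ) * ((z j + 1) / 2)) + (b i : ℂ) with hA
  -- imaginary part of each component
  have himA : ∀ z i, (A z i).im = ∑ j, W i j * ((z j).im / 2) := by
    intro z i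
    simp [hA, Complex.add_im, Complex.im_sum, Complex.div_im]
  -- A maps T into U
  have hmapsU : ∀ z ∈ T, A z ∈ U := by
    intro z hz i
    rw [himA]
    calc |∑ j, W i j * ((z j).im / 2)| ≤ ∑ j, |W i j * ((z j).im / 2)| :=
          Finset.abs_sum_le_sum_abs _ _
      _ ≤ ∑ j, (ρ j - 1) * β j / 2 := by
          refine Finset.sum_le_sum fun j _ => ?_
          rw [abs_mul, abs_div]
          have h1 := hW i j
          have h2 := him_le z hz j
          have h3 := hβ j
          have h4 : (0:ℝ) ≤ ρ j - 1 := by have := hρ j; linarith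
          calc |W i j| * (|(z j).im| / |(2:ℝ)|) ≤ β j * ((ρ j - 1) / 2) := by
                have : |(2:ℝ)| = 2 := by norm_num
                rw [this]
                exact mul_le_mul h1 (by linarith) (by positivity) h3
            _ = (ρ j - 1) * β j / 2 := by ring
      _ = (∑ j, (ρ j - 1) * β j) / 2 := by rw [Finset.sum_div]
      _ ≤ ε / 2 := by linarith
      _ < R := by linarith
  have hUopen : IsOpen U := by
    have : U = ⋂ i, {w : Fin k → ℂ | |(w i).im| < R} := by
      ext w; simp [hU, Set.mem_iInter]
    rw [this]
    refine isOpen_iInter_of_finite fun i => ?_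
    exact isOpen_lt (continuous_abs.comp (Complex.continuous_im.comp (continuous_apply i)))
      continuous_const
  have hAdiff : Differentiable ℂ A := by
    refine differentiable_pi.mpr fun i => ?_
    refine Differentiable.add ?_ (differentiable_const _)
    refine Differentiable.fun_sum fun j _ => ?_
    have h1 : Differentiable ℂ (fun z : Fin d → ℂ => z j + 1) :=
      ((ContinuousLinearMap.proj j : (Fin d → ℂ) →L[ℂ] ℂ).differentiable).add_const 1
    have h2 : Differentiable ℂ (fun z : Fin d → ℂ => (z j + 1) / 2) := by
      simp only [div_eq_mul_inv]
      exact h1.mul_const ((2:ℂ)⁻¹)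
    exact (differentiable_const _).mul h2
  constructor
  · intro z hz
    have h1 : DifferentiableAt ℂ σ (A z) :=
      hσ.differentiableAt (hUopen.mem_nhds (hmapsU z hz))
    exact h1.comp z (hAdiff z)
  · -- boundedness: the image of T under A lies in a compact subset of U
    set M : ℝ := (∑ j, β j * ((ρ j + 1) / 2)) + ‖(fun i => (b i : ℂ))‖ with hM
    have hM0 : 0 ≤ M := by
      refine add_nonneg (Finset.sum_nonneg fun j _ => ?_) (norm_nonneg _)
      have := hρ j; have := hβ j; positivity
    set K : Set (Fin k → ℂ) :=
      Metric.closedBall 0 M ∩ {w | ∀ i, |(w i).im| ≤ ε / 2} with hK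
    have hKcpt : IsCompact K := by
      refine (isCompact_closedBall (0 : Fin k → ℂ) M).inter_right ?_
      have : {w : Fin k → ℂ | ∀ i, |(w i).im| ≤ ε / 2}
          = ⋂ i, {w : Fin k → ℂ | |(w i).im| ≤ ε / 2} := by
        ext w; simp [Set.mem_iInter]
      rw [this]
      refine isClosed_iInter fun i => ?_
      exact isClosed_le (continuous_abs.comp (Complex.continuous_im.comp (continuous_apply i)))
        continuous_const
    have hKU : K ⊆ U := by
      rintro w ⟨-, hw⟩ i
      exact lt_of_le_of_lt (hw i) (by linarith)
    have hmapsK : ∀ z ∈ T, A z ∈ K := by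
      intro z hz
      constructor
      · rw [Metric.mem_closedBall, dist_zero_right]
        refine (pi_norm_le_iff_of_nonneg hM0).2 fun i => ?_
        have h1 : ‖A z i‖ ≤ (∑ j, β j * ((ρ j + 1) / 2)) + ‖(b i : ℂ)‖ := by
          calc ‖A z i‖
              ≤ ‖∑ j, (W i j : ℂ) * ((z j + 1) / 2)‖ + ‖(b i : ℂ)‖ :=
                norm_add_le _ _
            _ ≤ (∑ j, β j * ((ρ j + 1) / 2)) + ‖(b i : ℂ)‖ := by
                gcongr
                calc ‖∑ j, (W i j : ℂ) * ((z j + 1) / 2)‖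
                    ≤ ∑ j, ‖(W i j : ℂ) * ((z j + 1) / 2)‖ :=
                      norm_sum_le _ _
                  _ ≤ ∑ j, β j * ((ρ j + 1) / 2) := by
                      refine Finset.sum_le_sum fun j _ => ?_
                      rw [norm_mul, norm_div]
                      have h2 : ‖z j + 1‖ ≤ ρ j + 1 := by
                        calc ‖z j + 1‖ ≤ ‖z j‖ + ‖(1:ℂ)‖ :=
                              norm_add_le _ _
                          _ ≤ ρ j + 1 := by
                              have := habs_le z hz j; simp; linarith
                      have h3 : ‖(W i j : ℂ)‖ ≤ β j := by
                        simpa using hW i j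
                      have h4 : ‖(2 : ℂ)‖ = 2 := by norm_num
                      rw [h4]
                      have h5 : (0:ℝ) < ρ j + 1 := by have := hρ j; linarith
                      exact mul_le_mul h3 (by linarith [h2]) (by positivity) (hβ j)
        have h2 : ‖(b i : ℂ)‖ ≤ ‖(fun i => (b i : ℂ))‖ := by
          simpa using norm_le_pi_norm (fun i => (b i : ℂ)) i
        calc ‖A z i‖ = ‖A z i‖ := rfl
          _ ≤ M := by rw [hM]; linarith
      · intro i
        rw [himA]
        calc |∑ j, W i j * ((z j).im / 2)| ≤ ∑ j, |W i j * ((z j).im / 2)| :=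
              Finset.abs_sum_le_sum_abs _ _
          _ ≤ ∑ j, (ρ j - 1) * β j / 2 := by
              refine Finset.sum_le_sum fun j _ => ?_
              rw [abs_mul, abs_div]
              have h1 := hW i j
              have h2 := him_le z hz j
              have h3 := hβ j
              have h4 : (0:ℝ) ≤ ρ j - 1 := by have := hρ j; linarith
              calc |W i j| * (|(z j).im| / |(2:ℝ)|) ≤ β j * ((ρ j - 1) / 2) := by
                    have : |(2:ℝ)| = 2 := by norm_num
                    rw [this]
                    exact mul_le_mul h1 (by linarith) (by positivity) h3
                _ = (ρ j - 1) * β j / 2 := by ring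
          _ = (∑ j, (ρ j - 1) * β j) / 2 := by rw [Finset.sum_div]
          _ ≤ ε / 2 := by linarith
    obtain ⟨C, hC⟩ := hKcpt.exists_bound_of_continuousOn
      (hσ.continuousOn.mono hKU)
    exact ⟨C, fun z hz => hC (A z) (hmapsK z hz)⟩
end

section
/- Let L ≥ 2, let d₀ = d, d₁, …, d_L be natural numbers, let R, R' > 0 and 0 < ε < 2R. For each ℓ = 1, …, L−1 let σ_ℓ : ℂ^{d_ℓ} → ℂ^{d_ℓ} be complex-differentiable on the product strip S_R^{d_ℓ} = {w : |Im w_i| < R for all i} and map S_R^{d_ℓ} into S_{R'}^{d_ℓ}. Let β ∈ [0,∞)^d and ρ ∈ (1,∞)^d satisfy Σ_{j=1}^d (ρ_j − 1) β_j ≤ ε. Let W^(1) be a real d₁×d matrix with |W^(1)_{ij}| ≤ β_j for all i, j; for ℓ = 2, …, L−1 let W^(ℓ) be a real d_ℓ×d_{ℓ−1} matrix with max_i Σ_j |W^(ℓ)_{ij}| ≤ R/R'; let W^(L) be any real d_L×d_{L−1} matrix; and let b^(ℓ) ∈ ℝ^{d_ℓ} for ℓ = 1, …, L. Define the network map φ(z)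 = W^(L) ( σ_{L−1}( W^{(L−1)} ( ⋯ σ_1( W^(1) z + b^(1) ) ⋯ ) + b^{(L−1)} ) ) + b^(L). Then φ ∘ ξ is well defined and complex-differentiable at every point of the polytube T_ρ = {z ∈ ℂ^d : dist(z_j, [−1,1]) < ρ_j − 1 for all j}, and there exists a constant C such that ‖φ(ξ(z))‖ ≤ C for all z ∈ T_ρ. -/
open scoped BigOperators

/-- The affine map `z ↦ Wz + b` with real matrix `W` and real bias `b`,
acting on complex vectors. -/
noncomputable def affineLayer {m n : ℕ} (W : Fin m → Fin n → ℝ) (b : Fin m → ℝ)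
    (z : Fin n → ℂ) : Fin m → ℂ :=
  fun i => (∑ j, (W i j : ℂ) * z j) + (b i : ℂ)

/-- The hidden layers of the network: `hiddenLayers dims σ W b ℓ` is
`σ_ℓ(W^{(ℓ)} ( ⋯ σ_1(W^{(1)} z + b^{(1)}) ⋯ ) + b^{(ℓ)})`, where the paper's
`W^{(ℓ)}` and `b^{(ℓ)}` are `W (ℓ-1)` and `b (ℓ-1)` here. -/
noncomputable def hiddenLayers (dims : ℕ → ℕ)
    (σ : (ℓ : ℕ) → (Fin (dims ℓ) → ℂ) → (Fin (dims ℓ) → ℂ))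
    (W : (ℓ : ℕ) → Fin (dims (ℓ + 1)) → Fin (dims ℓ) → ℝ)
    (b : (ℓ : ℕ) → Fin (dims (ℓ + 1)) → ℝ) :
    (ℓ : ℕ) → (Fin (dims 0) → ℂ) → (Fin (dims ℓ) → ℂ)
  | 0 => fun z => z
  | (ℓ + 1) => fun z => σ (ℓ + 1) (affineLayer (W ℓ) (b ℓ) (hiddenLayers dims σ W b ℓ z))

lemma affineLayer_im {m n : ℕ} (W : Fin m → Fin n → ℝ) (b : Fin m → ℝ)
    (w : Fin n → ℂ) (i : Fin m) :
    (affineLayer W b w i).im = ∑ j, W i j * (w j).im := by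
  simp [affineLayer, Complex.im_sum, Complex.im_ofReal_mul]

lemma differentiable_affineLayer {m n : ℕ} (W : Fin m → Fin n → ℝ) (b : Fin m → ℝ) :
    Differentiable ℂ (affineLayer W b) := by
  unfold affineLayer
  fun_prop

lemma isOpen_strip (n : ℕ) (R : ℝ) : IsOpen {w : Fin n → ℂ | ∀ i, |(w i).im| < R} := by
  have h : {w : Fin n → ℂ | ∀ i, |(w i).im| < R} = ⋂ i, {w | |(w i).im| < R} := by
    ext w; simp [Set.mem_iInter]
  rw [h]
  exact isOpen_iInter_of_finite fun i =>
    isOpen_lt (continuous_abs.comp (Complex.continuous_im.comp (continuous_apply i)))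
      continuous_const

lemma middle_bound {m n : ℕ} (W : Fin m → Fin n → ℝ) (b : Fin m → ℝ) (w : Fin n → ℂ)
    {R R' : ℝ} (hR : 0 < R) (hR' : 0 < R') (hrow : ∀ i, ∑ j, |W i j| ≤ R / R')
    (hw : ∀ j, |(w j).im| < R') (i : Fin m) : |(affineLayer W b w i).im| < R := by
  rw [affineLayer_im]
  rcases isEmpty_or_nonempty (Fin n) with h | h
  · simpa [Finset.univ_eq_empty] using hR
  · have hne : (Finset.univ : Finset (Fin n)).Nonempty := Finset.univ_nonempty
    set M : ℝ := Finset.univ.sup' hne (fun j => |(w j).im|) with hM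
    have hMlt : M < R' := (Finset.sup'_lt_iff hne).mpr fun j _ => hw j
    obtain ⟨j0⟩ := h
    have hM0 : 0 ≤ M := le_trans (abs_nonneg ((w j0).im)) (Finset.le_sup' (fun j => |(w j).im|) (Finset.mem_univ j0))
    calc |∑ j, W i j * (w j).im| ≤ ∑ j, |W i j * (w j).im| :=
          Finset.abs_sum_le_sum_abs _ _
      _ = ∑ j, |W i j| * |(w j).im| := by simp [abs_mul]
      _ ≤ ∑ j, |W i j| * M := Finset.sum_le_sum fun j _ =>
          mul_le_mul_of_nonneg_left (Finset.le_sup' (fun j => |(w j).im|) (Finset.mem_univ j)) (abs_nonneg _)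
      _ = (∑ j, |W i j|) * M := by rw [Finset.sum_mul]
      _ ≤ (R / R') * M := mul_le_mul_of_nonneg_right (hrow i) hM0
      _ < (R / R') * R' := by
          exact mul_lt_mul_of_pos_left hMlt (div_pos hR hR')
      _ = R := div_mul_cancel₀ _ (ne_of_gt hR')

/-- quantified holomorphy of deep neural networks: under the strip
conditions on the activations and summability/row-sum conditions on the weights,
the network map composed with `ξ(z)_j = (z_j+1)/2` is complex-differentiable at
every point of the polytube `T_ρ` and bounded there. -/
theorem deep_network_holomorphic_on_polytube
    (L : ℕ) (hL : 2 ≤ L) (dims : ℕ → ℕ)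
    (R R' ε : ℝ) (hR : 0 < R) (hR' : 0 < R') (hε : 0 < ε) (hεR : ε < 2 * R)
    (σ : (ℓ : ℕ) → (Fin (dims ℓ) → ℂ) → (Fin (dims ℓ) → ℂ))
    (hσdiff : ∀ ℓ, 1 ≤ ℓ → ℓ ≤ L - 1 →
      DifferentiableOn ℂ (σ ℓ) {w : Fin (dims ℓ) → ℂ | ∀ i, |(w i).im| < R})
    (hσmap : ∀ ℓ, 1 ≤ ℓ → ℓ ≤ L - 1 → ∀ w : Fin (dims ℓ) → ℂ,
      (∀ i, |(w i).im| < R) → ∀ i, |((σ ℓ w) i).im| < R')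
    (β : Fin (dims 0) → ℝ) (hβ : ∀ j, 0 ≤ β j)
    (ρ : Fin (dims 0) → ℝ) (hρ : ∀ j, 1 < ρ j)
    (hsum : ∑ j, (ρ j - 1) * β j ≤ ε)
    (W : (ℓ : ℕ) → Fin (dims (ℓ + 1)) → Fin (dims ℓ) → ℝ)
    (b : (ℓ : ℕ) → Fin (dims (ℓ + 1)) → ℝ)
    (hW1 : ∀ i j, |W 0 i j| ≤ β j)
    (hWmid : ∀ ℓ, 1 ≤ ℓ → ℓ ≤ L - 2 → ∀ i, ∑ j, |W ℓ i j| ≤ R / R') :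
    (∀ z ∈ {z : Fin (dims 0) → ℂ |
        ∀ j, Metric.infDist (z j) (((↑) : ℝ → ℂ) '' Set.Icc (-1 : ℝ) 1) < ρ j - 1},
      DifferentiableAt ℂ
        (fun z : Fin (dims 0) → ℂ =>
          affineLayer (W (L - 1)) (b (L - 1))
            (hiddenLayers dims σ W b (L - 1) (fun j => (z j + 1) / 2))) z) ∧
    ∃ C : ℝ, ∀ z ∈ {z : Fin (dims 0) → ℂ |
        ∀ j, Metric.infDist (z j) (((↑) : ℝ → ℂ) '' Set.Icc (-1 : ℝ) 1) < ρ j - 1},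
      ‖affineLayer (W (L - 1)) (b (L - 1))
          (hiddenLayers dims σ W b (L - 1) (fun j => (z j + 1) / 2))‖ ≤ C := by
  classical
  set K : Set ℂ := ((↑) : ℝ → ℂ) '' Set.Icc (-1 : ℝ) 1 with hKdef
  have hKne : K.Nonempty := ⟨((-1 : ℝ) : ℂ), ⟨-1, by norm_num, rfl⟩⟩
  have hξ : Differentiable ℂ (fun z : Fin (dims 0) → ℂ => fun j => (z j + 1) / 2) := by
    fun_prop
  -- Step A: points whose coordinates are within closed distance ρ j - 1 of [-1,1]
  -- land, after the first affine layer, strictly inside the strip S_R.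
  have hbound1 : ∀ z : Fin (dims 0) → ℂ, (∀ j, Metric.infDist (z j) K ≤ ρ j - 1) →
      ∀ i, |(affineLayer (W 0) (b 0) (fun j => (z j + 1) / 2) i).im| < R := by
    intro z hz i
    have him : ∀ j, |(z j).im| ≤ ρ j - 1 := by
      intro j
      by_contra hcon
      push_neg at hcon
      obtain ⟨y, hyK, hy⟩ := (Metric.infDist_lt_iff hKne).mp (lt_of_le_of_lt (hz j) hcon)
      obtain ⟨x, hx, rfl⟩ := hyK
      have h1 : |(z j).im| ≤ dist (z j) ((x : ℝ) : ℂ) := by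
        have := Complex.abs_im_le_norm (z j - (x : ℝ))
        simpa [Complex.dist_eq, Complex.sub_im, Complex.ofReal_im] using this
      linarith
    rw [affineLayer_im]
    have hterm : ∀ j, |W 0 i j * ((z j + 1) / 2).im| ≤ β j * ((ρ j - 1) / 2) := by
      intro j
      have h2 : ((z j + 1) / 2).im = (z j).im / 2 := by
        simp [Complex.div_ofNat_im, Complex.add_im]
      rw [abs_mul, h2]
      have h3 : |(z j).im / 2| ≤ (ρ j - 1) / 2 := by
        rw [abs_div, abs_two]
        linarith [him j]
      exact mul_le_mul (hW1 i j) h3 (abs_nonneg _) (hβ j)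
    have hle : |∑ j, W 0 i j * ((z j + 1) / 2).im| ≤ ∑ j, β j * ((ρ j - 1) / 2) :=
      le_trans (Finset.abs_sum_le_sum_abs _ _) (Finset.sum_le_sum fun j _ => hterm j)
    have heq : ∑ j, β j * ((ρ j - 1) / 2) = (∑ j, (ρ j - 1) * β j) / 2 := by
      rw [Finset.sum_div]
      exact Finset.sum_congr rfl fun j _ => by ring
    have : |∑ j, W 0 i j * ((z j + 1) / 2).im| ≤ ε / 2 := by
      rw [heq] at hle
      linarith
    linarith
  -- Step B: induction through the hidden layers.
  have key : ∀ ℓ, 1 ≤ ℓ → ℓ ≤ L - 1 → ∀ z : Fin (dims 0) → ℂ,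
      (∀ i, |(affineLayer (W 0) (b 0) (fun j => (z j + 1) / 2) i).im| < R) →
      DifferentiableAt ℂ
        (fun z : Fin (dims 0) → ℂ => hiddenLayers dims σ W b ℓ (fun j => (z j + 1) / 2)) z ∧
      ∀ i, |((hiddenLayers dims σ W b ℓ (fun j => (z j + 1) / 2)) i).im| < R' := by
    intro ℓ h1
    induction ℓ, h1 using Nat.le_induction with
    | base =>
      intro _ z hz
      have hinner : Differentiable ℂ
          (fun z : Fin (dims 0) → ℂ => affineLayer (W 0) (b 0) (fun j => (z j + 1) / 2)) :=
        (differentiable_affineLayer (W 0) (b 0)).comp hξ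
      have hσ1 : DifferentiableAt ℂ (σ 1)
          (affineLayer (W 0) (b 0) (fun j => (z j + 1) / 2)) :=
        (hσdiff 1 le_rfl (by omega)).differentiableAt
          ((isOpen_strip _ R).mem_nhds hz)
      refine ⟨?_, fun i => hσmap 1 le_rfl (by omega) _ hz i⟩
      exact DifferentiableAt.comp z hσ1 (hinner z)
    | succ ℓ hℓ ih =>
      intro hle z hz
      have hℓle : ℓ ≤ L - 1 := by omega
      have hℓ2 : ℓ ≤ L - 2 := by omega
      obtain ⟨hdiff, him⟩ := ih hℓle z hz
      have hu : ∀ i, |(affineLayer (W ℓ) (b ℓ)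
          (hiddenLayers dims σ W b ℓ (fun j => (z j + 1) / 2)) i).im| < R :=
        middle_bound (W ℓ) (b ℓ) _ hR hR' (hWmid ℓ hℓ hℓ2) him
      have hσd : DifferentiableAt ℂ (σ (ℓ + 1))
          (affineLayer (W ℓ) (b ℓ)
            (hiddenLayers dims σ W b ℓ (fun j => (z j + 1) / 2))) :=
        (hσdiff (ℓ + 1) (by omega) hle).differentiableAt
          ((isOpen_strip _ R).mem_nhds hu)
      refine ⟨?_, fun i => hσmap (ℓ + 1) (by omega) hle _ hu i⟩
      have hmid : DifferentiableAt ℂ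
          (fun z : Fin (dims 0) → ℂ => affineLayer (W ℓ) (b ℓ)
            (hiddenLayers dims σ W b ℓ (fun j => (z j + 1) / 2))) z :=
        DifferentiableAt.comp z (differentiable_affineLayer (W ℓ) (b ℓ) _) hdiff
      exact DifferentiableAt.comp z hσd hmid
  have hL1 : 1 ≤ L - 1 := by omega
  -- Step C: assemble.
  constructor
  · intro z hz
    have hz' := hbound1 z fun j => (hz j).le
    exact DifferentiableAt.comp z (differentiable_affineLayer (W (L - 1)) (b (L - 1)) _)
      (key (L - 1) hL1 le_rfl z hz').1
  · set T : Set (Fin (dims 0) → ℂ) :=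
      Set.pi Set.univ (fun j => {c : ℂ | Metric.infDist c K ≤ ρ j - 1}) with hT
    have hTcomp : IsCompact T := by
      refine isCompact_univ_pi fun j => ?_
      refine IsCompact.of_isClosed_subset (isCompact_closedBall (0 : ℂ) (ρ j - 1 + 2))
        (isClosed_le (Metric.continuous_infDist_pt K) continuous_const) ?_
      intro c hc
      obtain ⟨y, hyK, hy⟩ := (Metric.infDist_lt_iff hKne).mp
        (lt_of_le_of_lt (hc : Metric.infDist c K ≤ ρ j - 1) (lt_add_one _))
      obtain ⟨x, hx, rfl⟩ := hyK
      have hxd : dist ((x : ℝ) : ℂ) 0 ≤ 1 := by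
        simp only [Complex.dist_eq, sub_zero, Complex.norm_real, Real.norm_eq_abs]
        rw [abs_le]
        exact ⟨hx.1, hx.2⟩
      have := dist_triangle c ((x : ℝ) : ℂ) 0
      simp only [Metric.mem_closedBall]
      linarith
    have hcont : ContinuousOn
        (fun z : Fin (dims 0) → ℂ =>
          affineLayer (W (L - 1)) (b (L - 1))
            (hiddenLayers dims σ W b (L - 1) (fun j => (z j + 1) / 2))) T := by
      intro z hz
      have hz' := hbound1 z fun j => hz j (Set.mem_univ j)
      exact (DifferentiableAt.comp z (differentiable_affineLayer (W (L - 1)) (b (L - 1)) _)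
        (key (L - 1) hL1 le_rfl z hz').1).continuousAt.continuousWithinAt
    obtain ⟨C, hC⟩ := hTcomp.exists_bound_of_continuousOn hcont
    exact ⟨C, fun z hz => hC z fun j _ => (hz j).le⟩
end

section
/- For every z ∈ ℂ with |Im z| < π/2, the logistic function satisfies |Im( 1/(1 + exp(−z)) )| < 1/2. In other words, the logistic function maps the strip S_{π/2} = {z ∈ ℂ : |Im z| < π/2} into the strip S_{1/2} = {w ∈ ℂ : |Im w| < 1/2}. -/
/-- the logistic function maps the strip `S_{π/2}` into the strip
`S_{1/2}`. -/
theorem logistic_maps_strip_into_strip (z : ℂ) (hz : |z.im| < Real.pi / 2) :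
    |(1 / (1 + Complex.exp (-z))).im| < 1 / 2 := by
  set a : ℝ := Real.exp (-z.re) with ha
  set y : ℝ := z.im with hy
  have ha0 : 0 < a := Real.exp_pos _
  have hcos : 0 < Real.cos y := by
    apply Real.cos_pos_of_mem_Ioo
    constructor <;> [linarith [abs_lt.mp hz |>.1]; linarith [abs_lt.mp hz |>.2]]
  have hd_re : (1 + Complex.exp (-z)).re = 1 + a * Real.cos y := by
    simp [Complex.add_re, Complex.exp_re, Complex.neg_re, Complex.neg_im, ha, hy]
  have hd_im : (1 + Complex.exp (-z)).im = -(a * Real.sin y) := by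
    simp [Complex.add_im, Complex.exp_im, Complex.neg_re, Complex.neg_im, ha, hy]
  have hN : Complex.normSq (1 + Complex.exp (-z)) = 1 + 2 * a * Real.cos y + a ^ 2 := by
    rw [Complex.normSq_apply, hd_re, hd_im]
    have := Real.sin_sq_add_cos_sq y
    ring_nf
    nlinarith [Real.sin_sq_add_cos_sq y]
  set N : ℝ := 1 + 2 * a * Real.cos y + a ^ 2 with hNdef
  have hNpos : 0 < N := by nlinarith
  have him : (1 / (1 + Complex.exp (-z))).im = a * Real.sin y / N := by
    rw [one_div, Complex.inv_im, hd_im, hN]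
    ring
  rw [him, abs_div, abs_of_pos hNpos, div_lt_iff₀ hNpos]
  have hsin : |Real.sin y| ≤ 1 := Real.abs_sin_le_one y
  have habs : |a * Real.sin y| = a * |Real.sin y| := by
    rw [abs_mul, abs_of_pos ha0]
  rw [habs]
  nlinarith [sq_nonneg (a - 1), mul_pos ha0 hcos]
end

section
/- Let d ≥ 1 and let z ∈ ℂ^d satisfy |Im z_k| < π/4 for every k = 1, …, d. Then for each k, the k-th softmax component satisfies |Im( exp(z_k) / Σ_{j=1}^d exp(z_j) )| < 2√2. In other words, the softmax function maps the product strip S_{π/4}^d into the product strip S_{2√2}^d. -/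
open scoped BigOperators

/-- the softmax function maps the product strip `S_{π/4}^d` into
the product strip `S_{2√2}^d`. -/
theorem softmax_maps_strip_into_strip (d : ℕ) (hd : 1 ≤ d)
    (z : Fin d → ℂ) (hz : ∀ k, |(z k).im| < Real.pi / 4) :
    ∀ k : Fin d,
      |(Complex.exp (z k) / ∑ j, Complex.exp (z j)).im| < 2 * Real.sqrt 2 := by
  intro k
  set D : ℂ := ∑ j, Complex.exp (z j) with hD
  have hs2 : (0:ℝ) < Real.sqrt 2 := Real.sqrt_pos.mpr (by norm_num)
  have hcos : ∀ j : Fin d, Real.sqrt 2 / 2 < Real.cos (z j).im := by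
    intro j
    have : Real.cos (Real.pi / 4) < Real.cos |(z j).im| :=
      Real.cos_lt_cos_of_nonneg_of_le_pi (abs_nonneg _)
        (by linarith [Real.pi_pos]) (hz j)
    rwa [Real.cos_pi_div_four, Real.cos_abs] at this
  have hre : ∀ j : Fin d,
      Real.sqrt 2 / 2 * Real.exp (z j).re ≤ (Complex.exp (z j)).re := by
    intro j
    rw [Complex.exp_re]
    have := Real.exp_pos (z j).re
    nlinarith [hcos j]
  have h1 : Real.sqrt 2 / 2 * Real.exp (z k).re
      ≤ ∑ j, Real.sqrt 2 / 2 * Real.exp (z j).re :=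
    Finset.single_le_sum (f := fun j => Real.sqrt 2 / 2 * Real.exp (z j).re) (fun j _ => by positivity) (Finset.mem_univ k)
  have h2 : ∑ j, Real.sqrt 2 / 2 * Real.exp (z j).re ≤ D.re := by
    rw [hD, Complex.re_sum]
    exact Finset.sum_le_sum fun j _ => hre j
  have hDre : Real.sqrt 2 / 2 * Real.exp (z k).re ≤ D.re := le_trans h1 h2
  have hek : (0:ℝ) < Real.exp (z k).re := Real.exp_pos _
  have hDrepos : 0 < D.re := lt_of_lt_of_le (by positivity) hDre
  have hDne : D ≠ 0 := fun h => by simp [h] at hDrepos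
  have hDabs : Real.sqrt 2 / 2 * Real.exp (z k).re ≤ ‖D‖ :=
    le_trans hDre (Complex.re_le_norm D)
  have h3 : |(Complex.exp (z k) / D).im| ≤ ‖Complex.exp (z k) / D‖ :=
    Complex.abs_im_le_norm _
  have h4 : ‖Complex.exp (z k) / D‖
      = Real.exp (z k).re / ‖D‖ := by
    rw [norm_div, Complex.norm_exp]
  have h5 : Real.exp (z k).re / ‖D‖
      ≤ Real.exp (z k).re / (Real.sqrt 2 / 2 * Real.exp (z k).re) :=
    div_le_div_of_nonneg_left hek.le (by positivity) hDabs
  have h6 : Real.exp (z k).re / (Real.sqrt 2 / 2 * Real.exp (z k).re)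
      = 2 / Real.sqrt 2 := by
    have h2' : Real.sqrt 2 * Real.sqrt 2 = 2 := Real.mul_self_sqrt (by norm_num)
    field_simp
  have h7 : 2 / Real.sqrt 2 < 2 * Real.sqrt 2 := by
    rw [div_lt_iff₀ hs2]
    nlinarith [Real.mul_self_sqrt (by norm_num : (0:ℝ) ≤ 2)]
  calc |(Complex.exp (z k) / D).im| ≤ _ := h3
    _ = _ := h4
    _ ≤ _ := h5
    _ = 2 / Real.sqrt 2 := h6
    _ < 2 * Real.sqrt 2 := h7
end
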